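/- For odd n ≥ 1, define F_n(h) := Σ_{k=0}^{h} ((C(n,k) - C(n,k-1))/C(n,h)) · ((n-k-h)/(n-2k)) for 0 ≤ h ≤ (n-1)/2. Then F_n(0) = 1 and F_n satisfies the recurrence F_n(h) = a(n,h)·F_n(h-1) + b(n,h) for 1 ≤ h ≤ (n-1)/2, where a(n,h) = (n-2h)h/((n-2h+2)(n-h+1)) and b(n,h) = (4h² - (4n+5)h + (n+1)(n+2))/((n-2h+2)(n-h+1)). -/

import Mathlib

def ch (n : ℕ) (j : ℤ) : ℚ := if j < 0 then 0 else (n.choose j.toNat : ℚ)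

def Fid (n h : ℕ) : ℚ :=
  ∑ k ∈ Finset.range (h + 1),
    ((ch n k - ch n ((k : ℤ) - 1)) / (n.choose h : ℚ))
      * (((n : ℚ) - k - h) / ((n : ℚ) - 2 * k))

/-!
Splitting `n - k - h = (n - 2h)/2 + (n - 2k)/2` in each summand of `F_n(h)`, the second half
telescopes to `C(n,h)/2`, so `F_n(h) = (n - 2h)/2 · S(h)/C(n,h) + 1/2` with
`S(h) = Σ_{k ≤ h} (C(n,k) - C(n,k-1))/(n - 2k)`. Since `S(h) - S(h-1)` is a single term and
`h · C(n,h) = (n - h + 1) · C(n,h-1)`, eliminating `S` between two consecutive values of `h`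
is a rational identity, which gives the recurrence.
-/

theorem ch_natCast (n k : ℕ) : ch n k = n.choose k := by
  simp [ch]

theorem ch_natCast_sub_one (n k : ℕ) : ch n ((k + 1 : ℕ) - 1 : ℤ) = n.choose k := by
  simp [ch_natCast]

theorem sum_range_ch_sub (n h : ℕ) :
    ∑ k ∈ Finset.range (h + 1), (ch n k - ch n ((k : ℤ) - 1)) = n.choose h := by
  have ch_neg_one : ch n (-1) = 0 := by simp [ch]
  simpa only [Nat.cast_add, Nat.cast_one, add_sub_cancel_right, Nat.cast_zero, zero_sub,
    ch_neg_one, sub_zero, ch_natCast] using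
    Finset.sum_range_sub (fun k : ℕ => ch n ((k : ℤ) - 1)) (h + 1)

theorem Odd.natCast_sub_two_mul_ne_zero {R : Type*} [Ring R] [CharZero R] {n : ℕ} (hn : Odd n)
    (k : ℕ) : (n : R) - 2 * k ≠ 0 := by
  rw [sub_ne_zero]
  norm_cast
  rintro rfl
  exact Nat.not_odd_iff_even.mpr (even_two_mul k) hn

def ballotSum (n h : ℕ) : ℚ :=
  ∑ k ∈ Finset.range (h + 1), (ch n k - ch n ((k : ℤ) - 1)) / ((n : ℚ) - 2 * k)

theorem ballotSum_succ (n h : ℕ) :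
    ballotSum n (h + 1) =
      ballotSum n h + ((n.choose (h + 1) : ℚ) - n.choose h) / ((n : ℚ) - 2 * (h + 1 : ℕ)) := by
  rw [ballotSum, Finset.sum_range_succ, ← ballotSum, ch_natCast, ch_natCast_sub_one]

theorem Fid_eq_ballotSum {n h : ℕ} (hn : Odd n) (hh : h ≤ n) :
    Fid n h = ((n : ℚ) - 2 * h) / 2 * ballotSum n h / n.choose h + 1 / 2 := by
  have hC : (n.choose h : ℚ) ≠ 0 := by exact_mod_cast (Nat.choose_pos hh).ne'
  have split_summand : ∀ k ∈ Finset.range (h + 1),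
      (ch n k - ch n ((k : ℤ) - 1)) / (n.choose h : ℚ) * (((n : ℚ) - k - h) / ((n : ℚ) - 2 * k))
        = ((n : ℚ) - 2 * h) / 2 / n.choose h
            * ((ch n k - ch n ((k : ℤ) - 1)) / ((n : ℚ) - 2 * k))
          + (ch n k - ch n ((k : ℤ) - 1)) / (2 * n.choose h) := by
    intro k _
    have hk := hn.natCast_sub_two_mul_ne_zero (R := ℚ) k
    rw [show (n : ℚ) - k - h = ((n : ℚ) - 2 * h) / 2 + ((n : ℚ) - 2 * k) / 2 by ring]
    generalize (n : ℚ) - 2 * k = d at hk ⊢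
    field_simp
  rw [Fid, Finset.sum_congr rfl split_summand, Finset.sum_add_distrib, ← Finset.mul_sum,
    ← Finset.sum_div, sum_range_ch_sub, ← ballotSum]
  field_simp

theorem cast_choose_succ {n h : ℕ} (hh : h ≤ n) :
    (n.choose (h + 1) : ℚ) = n.choose h * ((n : ℚ) - h) / (h + 1) := by
  rw [eq_div_iff (by positivity), ← Nat.cast_sub hh]
  exact_mod_cast Nat.choose_succ_right_eq n h

theorem Fid_zero {n : ℕ} (hn : Odd n) : Fid n 0 = 1 := by
  have : (n : ℚ) ≠ 0 := by exact_mod_cast hn.pos.ne'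
  simp [Fid, ch, this]

theorem Fid_eq_recurrence {n h : ℕ} (hn : Odd n) (h1 : 1 ≤ h) (hh : 2 * h + 1 ≤ n) :
    Fid n h
      = ((n : ℚ) - 2 * h) * h / (((n : ℚ) - 2 * h + 2) * ((n : ℚ) - h + 1)) * Fid n (h - 1)
        + (4 * (h : ℚ) ^ 2 - (4 * n + 5) * h + (n + 1) * (n + 2))
            / (((n : ℚ) - 2 * h + 2) * ((n : ℚ) - h + 1)) := by
  obtain ⟨g, rfl⟩ : ∃ g, h = g + 1 := ⟨h - 1, by omega⟩
  have hgn : (2 * g + 3 : ℚ) ≤ n := by exact_mod_cast hh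
  have hC : (n.choose g : ℚ) ≠ 0 := by exact_mod_cast (Nat.choose_pos (by omega)).ne'
  have hd := hn.natCast_sub_two_mul_ne_zero (R := ℚ) (g + 1)
  rw [Fid_eq_ballotSum hn (by omega), Nat.add_sub_cancel, Fid_eq_ballotSum hn (by omega),
    ballotSum_succ, cast_choose_succ (by omega)]
  push_cast at hd ⊢
  have : (n : ℚ) - 2 * (g + 1) + 2 ≠ 0 := by linarith
  have : (n : ℚ) - (g + 1) + 1 ≠ 0 := by linarith
  have : (n : ℚ) - g ≠ 0 := by linarith
  field_simp
  ring

theorem fid_recurrence_general (n : ℕ) (hn : Odd n) :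
    Fid n 0 = 1 ∧
    ∀ h : ℕ, 1 ≤ h → h ≤ (n - 1) / 2 →
      Fid n h
        = (((n : ℚ) - 2 * h) * h / ((((n : ℚ) - 2 * h + 2)) * ((n : ℚ) - h + 1)))
            * Fid n (h - 1)
          + (4 * (h : ℚ) ^ 2 - (4 * (n : ℚ) + 5) * h + ((n : ℚ) + 1) * ((n : ℚ) + 2))
            / ((((n : ℚ) - 2 * h + 2)) * ((n : ℚ) - h + 1)) :=
  ⟨Fid_zero hn, fun _ h1 hh => Fid_eq_recurrence hn h1 (by omega)⟩

/-- For odd `n ≥ 1`: `F_n(0) = 1` and `F_n` satisfies the linear recurrence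
`F_n(h) = a(n,h)·F_n(h-1) + b(n,h)` for `1 ≤ h ≤ (n-1)/2`, where
`a(n,h) = (n-2h)h/((n-2h+2)(n-h+1))` and
`b(n,h) = (4h² - (4n+5)h + (n+1)(n+2))/((n-2h+2)(n-h+1))`. -/
theorem fid_recurrence (n : ℕ) (hn : Odd n) (hn1 : 1 ≤ n) :
    Fid n 0 = 1 ∧
    ∀ h : ℕ, 1 ≤ h → h ≤ (n - 1) / 2 →
      Fid n h
        = (((n : ℚ) - 2 * h) * h / ((((n : ℚ) - 2 * h + 2)) * ((n : ℚ) - h + 1)))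
            * Fid n (h - 1)
          + (4 * (h : ℚ) ^ 2 - (4 * (n : ℚ) + 5) * h + ((n : ℚ) + 1) * ((n : ℚ) + 2))
            / ((((n : ℚ) - 2 * h + 2)) * ((n : ℚ) - h + 1)) :=
  fid_recurrence_general n hn
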